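/- Let N ≥ 1 be a natural number, let a ∈ ℤ, and let S = {a, a+1, …, a+N−1} be a set of N successive vertices of the line graph ℤ. Then for every φ : ℤ → ℂ with support contained in S, (∑_{k∈ℤ} |φ(k)|²)^{1/2} ≤ (1/2)·sin^{−2}(π/(2N+2))·(∑_{k∈ℤ} |(𝓛φ)(k)|²)^{1/2}, where (𝓛φ)(k) = φ(k) − (φ(k−1) + φ(k+1))/2; that is, S is a Λ-set with Λ = (1/2)·sin^{−2}(π/(2|S|+2)). -/

import Mathlib

open scoped Real

/-- The normalized Laplacian of the line graph `ℤ`: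
`(𝓛 f) k = f k − (f (k−1) + f (k+1))/2`. -/
noncomputable def lapZ (f : ℤ → ℂ) (k : ℤ) : ℂ :=
  f k - (f (k - 1) + f (k + 1)) / 2

/-!
Pair `𝓛φ` with `φ` in the real inner product of `ℓ²(ℤ, ℂ)`. Shifting the sum turns
`⟪φ, 𝓛φ⟫` into `‖φ‖² - ∑ Re(conj φ(k) φ(k+1))`, and the correlation sum is at most
`cos(π/(N+1)) ‖φ‖²` for `φ` supported on `N` consecutive vertices: this is the discrete Wirtinger
inequality, proved by writing `|φ(k)| = w(k) h(k)` with the positive Dirichlet eigenvector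
`w(k) = sin(π (k - a + 1)/(N+1))` of the path, for which `w(k-1) + w(k+1) = 2 cos(π/(N+1)) w(k)`,
and applying `2 h(k) h(k+1) ≤ h(k)² + h(k+1)²`. Hence `2 sin²(π/(2N+2)) ‖φ‖² ≤ ⟪φ, 𝓛φ⟫ ≤ ‖φ‖ ‖𝓛φ‖`.
-/

open scoped InnerProductSpace
open Function

-- lets `fun_prop (disch := simp)` prove finite support of functions of `φ (k ± 1)`
attribute [local simp] add_left_injective sub_left_injective

theorem Function.HasFiniteSupport.lapZ {φ : ℤ → ℂ} (hφ : φ.HasFiniteSupport) :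
    (lapZ φ).HasFiniteSupport := by
  unfold _root_.lapZ
  fun_prop (disch := simp)

theorem inner_lapZ (φ : ℤ → ℂ) (k : ℤ) :
    ⟪φ k, lapZ φ k⟫_ℝ = ‖φ k‖ ^ 2 - (⟪φ k, φ (k - 1)⟫_ℝ + ⟪φ k, φ (k + 1)⟫_ℝ) / 2 := by
  have half : (φ (k - 1) + φ (k + 1)) / 2 = (2⁻¹ : ℝ) • (φ (k - 1) + φ (k + 1)) := by
    rw [Complex.real_smul, div_eq_inv_mul]
    norm_num
  rw [lapZ, half, inner_sub_right, inner_smul_right, inner_add_right, real_inner_self_eq_norm_sq]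
  ring

theorem tsum_inner_lapZ {φ : ℤ → ℂ} (hφ : φ.HasFiniteSupport) :
    ∑' k, ⟪φ k, lapZ φ k⟫_ℝ = ∑' k, ‖φ k‖ ^ 2 - ∑' k, ⟪φ k, φ (k + 1)⟫_ℝ := by
  have hback : ∑' k, ⟪φ k, φ (k - 1)⟫_ℝ = ∑' k, ⟪φ k, φ (k + 1)⟫_ℝ := by
    rw [← (Equiv.addRight (1 : ℤ)).tsum_eq fun k => ⟪φ k, φ (k - 1)⟫_ℝ]
    congr 1 with k
    simp only [Equiv.coe_addRight, add_sub_cancel_right]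
    exact real_inner_comm _ _
  simp_rw [inner_lapZ]
  rw [Summable.tsum_sub, tsum_div_const, Summable.tsum_add, hback]
  · ring
  all_goals
    exact summable_of_hasFiniteSupport <| by
      fun_prop (disch := simp)

theorem tsum_mul_shift_eq_of_eigen {w u : ℤ → ℝ} {c : ℝ}
    (hw : ∀ k, w (k - 1) + w (k + 1) = 2 * c * w k) (hu : u.HasFiniteSupport) :
    ∑' k, w k * w (k + 1) * (u k + u (k + 1)) = 2 * c * ∑' k, w k ^ 2 * u k := by
  have hback : ∑' k, w k * w (k + 1) * u (k + 1) = ∑' k, w (k - 1) * w k * u k := by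
    rw [← (Equiv.addRight (1 : ℤ)).tsum_eq fun k => w (k - 1) * w k * u k]
    simp only [Equiv.coe_addRight, add_sub_cancel_right]
  simp_rw [mul_add]
  rw [Summable.tsum_add, hback, ← Summable.tsum_add, ← tsum_mul_left]
  · congr 1 with k
    linear_combination w k * u k * hw k
  all_goals
    exact summable_of_hasFiniteSupport <| by
      fun_prop (disch := simp)

theorem sin_pi_div_succ_mul_pos {N : ℕ} {j : ℤ} (h0 : 0 < j) (hj : j < N + 1) :
    0 < Real.sin (π / (N + 1) * j) := by
  have hj' : (j : ℝ) < N + 1 := by exact_mod_cast hj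
  refine Real.sin_pos_of_pos_of_lt_pi (by positivity) ?_
  calc π / (N + 1) * j < π / (N + 1) * (N + 1) := by gcongr
    _ = π := div_mul_cancel₀ _ (by positivity)

theorem sin_pi_div_succ_mul_nonneg {N : ℕ} {j : ℤ} (h0 : 0 ≤ j) (hj : j ≤ N + 1) :
    0 ≤ Real.sin (π / (N + 1) * j) := by
  have hj' : (j : ℝ) ≤ N + 1 := by exact_mod_cast hj
  refine Real.sin_nonneg_of_nonneg_of_le_pi (by positivity) ?_
  calc π / (N + 1) * j ≤ π / (N + 1) * (N + 1) := by gcongr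
    _ = π := div_mul_cancel₀ _ (by positivity)

theorem sin_mul_sub_one_add_sin_mul_add_one (θ x : ℝ) :
    Real.sin (θ * (x - 1)) + Real.sin (θ * (x + 1)) = 2 * Real.cos θ * Real.sin (θ * x) := by
  rw [mul_sub, mul_add, mul_one, Real.sin_sub, Real.sin_add]
  ring

theorem tsum_mul_shift_le_cos (N : ℕ) (a : ℤ) {g : ℤ → ℝ}
    (hg : g.support ⊆ Set.Icc a (a + N - 1)) :
    ∑' k, g k * g (k + 1) ≤ Real.cos (π / (N + 1)) * ∑' k, g k ^ 2 := by
  set θ := π / (N + 1)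
  set w : ℤ → ℝ := fun k => Real.sin (θ * ((k - a + 1 : ℤ) : ℝ))
  set h : ℤ → ℝ := fun k => g k / w k
  have hg_zero : ∀ k, k ∉ Set.Icc a (a + N - 1) → g k = 0 := support_subset_iff'.1 hg
  have hw_eigen : ∀ k, w (k - 1) + w (k + 1) = 2 * Real.cos θ * w k := fun k => by
    convert sin_mul_sub_one_add_sin_mul_add_one θ (k - a + 1) using 4 <;> push_cast <;> ring
  have hg_eq : ∀ k, g k = w k * h k := by
    intro k
    by_cases hk : k ∈ Set.Icc a (a + N - 1)
    · obtain ⟨hak, hkN⟩ := hk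
      exact (mul_div_cancel₀ _ (sin_pi_div_succ_mul_pos (by omega) (by omega)).ne').symm
    · simp [h, hg_zero k hk]
  have hpair : ∀ k, 2 * (g k * g (k + 1)) ≤ w k * w (k + 1) * (h k ^ 2 + h (k + 1) ^ 2) := by
    intro k
    by_cases hk : k ∈ Set.Icc (a - 1) (a + N - 1)
    · obtain ⟨hak, hkN⟩ := hk
      have hw : 0 ≤ w k * w (k + 1) := mul_nonneg
        (sin_pi_div_succ_mul_nonneg (by omega) (by omega))
        (sin_pi_div_succ_mul_nonneg (by omega) (by omega))
      rw [hg_eq k, hg_eq (k + 1)]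
      nlinarith [mul_le_mul_of_nonneg_left (two_mul_le_add_sq (h k) (h (k + 1))) hw]
    · have h0 : g k = 0 := hg_zero k (by simp at hk ⊢; omega)
      have h1 : g (k + 1) = 0 := hg_zero (k + 1) (by simp at hk ⊢; omega)
      simp [h, h0, h1]
  have hfin : g.HasFiniteSupport := (Set.finite_Icc _ _).subset hg
  have hh : h.HasFiniteSupport := hfin.subset fun k hk hgk => hk (by simp [h, hgk])
  have hdouble : 2 * ∑' k, g k * g (k + 1) ≤ 2 * (Real.cos θ * ∑' k, g k ^ 2) :=
    calc 2 * ∑' k, g k * g (k + 1) = ∑' k, 2 * (g k * g (k + 1)) := tsum_mul_left.symm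
      _ ≤ ∑' k, w k * w (k + 1) * (h k ^ 2 + h (k + 1) ^ 2) :=
        Summable.tsum_le_tsum hpair
          (summable_of_hasFiniteSupport (by fun_prop (disch := simp)))
          (summable_of_hasFiniteSupport (by fun_prop (disch := simp)))
      _ = 2 * Real.cos θ * ∑' k, w k ^ 2 * h k ^ 2 :=
        tsum_mul_shift_eq_of_eigen (u := fun k => h k ^ 2) hw_eigen (by fun_prop (disch := simp))
      _ = 2 * (Real.cos θ * ∑' k, g k ^ 2) := by
        simp_rw [hg_eq, mul_pow]
        ring
  linarith

theorem tsum_inner_le_sqrt_mul_sqrt {ι E : Type*} [NormedAddCommGroup E] [InnerProductSpace ℝ E]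
    {f g : ι → E} (hfg : Summable fun i => ⟪f i, g i⟫_ℝ) (hf : Summable fun i => ‖f i‖ ^ 2)
    (hg : Summable fun i => ‖g i‖ ^ 2) :
    ∑' i, ⟪f i, g i⟫_ℝ ≤ √(∑' i, ‖f i‖ ^ 2) * √(∑' i, ‖g i‖ ^ 2) := by
  have holder := Real.summable_and_inner_le_Lp_mul_Lq_tsum_of_nonneg Real.HolderConjugate.two_two
    (f := fun i => ‖f i‖) (g := fun i => ‖g i‖) (fun _ => norm_nonneg _) (fun _ => norm_nonneg _)
    (by simpa [Real.rpow_two] using hf) (by simpa [Real.rpow_two] using hg)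
  simp only [Real.rpow_two, ← Real.sqrt_eq_rpow] at holder
  exact (hfg.tsum_le_tsum (fun i => real_inner_le_norm _ _) holder.1).trans holder.2

theorem sqrt_le_inv_mul_sqrt_of_mul_le {P Q c : ℝ} (hc : 0 < c) (hP : 0 ≤ P)
    (h : c * P ≤ √P * √Q) : √P ≤ c⁻¹ * √Q := by
  rw [le_inv_mul_iff₀ hc]
  rcases (Real.sqrt_nonneg P).eq_or_lt with h0 | hpos
  · rw [← h0, mul_zero]
    exact Real.sqrt_nonneg Q
  · refine le_of_mul_le_mul_left ?_ hpos
    calc √P * (c * √P) = c * P := by rw [mul_left_comm, Real.mul_self_sqrt hP]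
      _ ≤ √P * √Q := h

theorem interval_lambda_set_general (N : ℕ) (a : ℤ) (φ : ℤ → ℂ)
    (hsupp : ∀ k : ℤ, k ∉ Set.Icc a (a + N - 1) → φ k = 0) :
    Real.sqrt (∑' k : ℤ, ‖φ k‖ ^ 2) ≤
      (1 / 2) * (Real.sin (π / (2 * N + 2))) ⁻¹ ^ 2 * Real.sqrt (∑' k : ℤ, ‖lapZ φ k‖ ^ 2) := by
  have hφ : φ.support ⊆ Set.Icc a (a + N - 1) := support_subset_iff'.2 hsupp
  have hfin : φ.HasFiniteSupport := (Set.finite_Icc _ _).subset hφ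
  set s := Real.sin (π / (2 * N + 2))
  have hs : 0 < s := Real.sin_pos_of_pos_of_lt_pi (by positivity)
    (div_lt_self Real.pi_pos (by linarith [N.cast_nonneg (α := ℝ)]))
  have hcos : 1 - Real.cos (π / (N + 1)) = 2 * s ^ 2 := by
    rw [show π / (N + 1) = 2 * (π / (2 * N + 2)) by field_simp, Real.cos_two_mul_eq_one_sub]
    ring
  have hcorr : ∑' k, ⟪φ k, φ (k + 1)⟫_ℝ ≤ Real.cos (π / (N + 1)) * ∑' k, ‖φ k‖ ^ 2 :=
    (Summable.tsum_le_tsum (fun k => real_inner_le_norm _ _)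
      (summable_of_hasFiniteSupport (by fun_prop (disch := simp)))
      (summable_of_hasFiniteSupport (by fun_prop (disch := simp)))).trans
      (tsum_mul_shift_le_cos N a (g := (‖φ ·‖)) (by simpa using hφ))
  have hlower : 2 * s ^ 2 * ∑' k, ‖φ k‖ ^ 2 ≤ ∑' k, ⟪φ k, lapZ φ k⟫_ℝ := by
    rw [tsum_inner_lapZ hfin, ← hcos]
    linarith
  have hlap := hfin.lapZ
  have hupper := tsum_inner_le_sqrt_mul_sqrt (f := φ) (g := lapZ φ)
    (summable_of_hasFiniteSupport (by fun_prop (disch := simp)))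
    (summable_of_hasFiniteSupport (by fun_prop (disch := simp)))
    (summable_of_hasFiniteSupport (by fun_prop (disch := simp)))
  convert sqrt_le_inv_mul_sqrt_of_mul_le (by positivity) (tsum_nonneg fun k => by positivity)
    (hlower.trans hupper) using 2
  rw [mul_inv, inv_pow]
  norm_num

/-- A set `S = {a, …, a+N−1}` of `N ≥ 1` successive vertices of `ℤ` is a
`Λ`-set with `Λ = (1/2)·sin⁻²(π/(2N+2))`. -/
theorem interval_lambda_set (N : ℕ) (hN : 1 ≤ N) (a : ℤ) (φ : ℤ → ℂ)
    (hsupp : ∀ k : ℤ, k ∉ Set.Icc a (a + N - 1) → φ k = 0) :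
    Real.sqrt (∑' k : ℤ, ‖φ k‖ ^ 2) ≤
      (1 / 2) * (Real.sin (π / (2 * N + 2))) ⁻¹ ^ 2 * Real.sqrt (∑' k : ℤ, ‖lapZ φ k‖ ^ 2) :=
  interval_lambda_set_general N a φ hsupp
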